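/- In a finite concurrent reachability game, if a set of states Bd ⊆ Q consists only of sub-maximizable states (Bd ⊆ SubMaxQ_A), then every state outside the secure set w.r.t. Bd is sub-maximizable as well: Q ∖ Sec(Bd) ⊆ SubMaxQ_A. -/

import Mathlib

open scoped BigOperators Classical

noncomputable section

/-- A probability distribution on a finite type. -/
def FDist (X : Type) [Fintype X] : Type :=
  { p : X → ℝ // (∀ x, 0 ≤ p x) ∧ ∑ x, p x = 1 }

namespace CRG

variable {A B Q D : Type} [Fintype A] [Fintype B] [Fintype Q] [Fintype D]

/-- The support of a distribution. -/
def supp {X : Type} [Fintype X] (σ : FDist X) : Set X := { x | σ.1 x ≠ 0 }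

/-- The Dirac distribution. -/
def dirac {X : Type} [Fintype X] [DecidableEq X] (x : X) : FDist X :=
  ⟨fun y => if y = x then 1 else 0, by
    constructor
    · intro y
      dsimp only
      split <;> norm_num
    · simp⟩

/-- Outcome of a pair of mixed strategies in the game in normal form with payoff `u`. -/
def out (u : A → B → ℝ) (σA : FDist A) (σB : FDist B) : ℝ :=
  ∑ a, ∑ b, σA.1 a * σB.1 b * u a b

/-- Outcome of a mixed strategy of Player A against a pure action of Player B. -/
def outB (u : A → B → ℝ) (σA : FDist A) (b : B) : ℝ :=
  ∑ a, σA.1 a * u a b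

/-- The value of a Player A mixed strategy in a game in normal form. -/
def valStratGF (u : A → B → ℝ) (σA : FDist A) : ℝ :=
  ⨅ σB : FDist B, out u σA σB

/-- The (von Neumann) value of a finite game in normal form. -/
def valGF (u : A → B → ℝ) : ℝ :=
  ⨆ σA : FDist A, valStratGF u σA

/-- The optimal Player A mixed strategies in a game in normal form. -/
def OptA (u : A → B → ℝ) : Set (FDist A) := { σA | valStratGF u σA = valGF u }

/-- The optimal actions of Player B against the Player A mixed strategy `σA`. -/
def optActs (u : A → B → ℝ) (σA : FDist A) : Set B :=
  { b | outB u σA b = valStratGF u σA }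

/-- μ_v : the lift of a valuation of the states to the Nature states. -/
def lift (dist : D → FDist Q) (v : Q → ℝ) (d : D) : ℝ := ∑ q, (dist d).1 q * v q

/-- The payoff function of the local interaction `F_q` valued by `μ_m`. -/
def locPay (δ : Q → A → B → D) (dist : D → FDist Q) (m : Q → ℝ) (q : Q) : A → B → ℝ :=
  fun a b => lift dist m (δ q a b)

/-- One-step transition probability between states. -/
def step (δ : Q → A → B → D) (dist : D → FDist Q) (σA : FDist A) (σB : FDist B)
    (q q' : Q) : ℝ :=
  ∑ a, ∑ b, σA.1 a * σB.1 b * (dist (δ q a b)).1 q'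

/-- The operator Δ on valuations of the states. -/
def Δop (δ : Q → A → B → D) (dist : D → FDist Q) (T : Q) (v : Q → ℝ) : Q → ℝ :=
  fun q => if q = T then 1 else valGF (fun a b => lift dist v (δ q a b))

/-- The target `T` is an absorbing (self-looping) sink. -/
def Absorbing (δ : Q → A → B → D) (dist : D → FDist Q) (T : Q) : Prop :=
  ∀ a b, (dist (δ T a b)).1 = fun q => if q = T then 1 else 0

/-- `m` is the least fixed point of Δ on `[0,1]^Q`. -/
def IsLfpDelta (δ : Q → A → B → D) (dist : D → FDist Q) (T : Q) (m : Q → ℝ) : Prop :=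
  (∀ q, m q ∈ Set.Icc (0:ℝ) 1) ∧ Δop δ dist T m = m ∧
    ∀ v : Q → ℝ, (∀ q, v q ∈ Set.Icc (0:ℝ) 1) → Δop δ dist T v = v → ∀ q, m q ≤ v q

/-- A strategy: a history of past states together with the current state gives a
mixed action.  (This encodes maps `Q⁺ → 𝒟(X)`.) -/
def Strat (Q X : Type) [Fintype X] : Type := List Q → Q → FDist X

/-- Residual strategy after the history `π` has been played. -/
def residual {X : Type} [Fintype X] (s : Strat Q X) (π : List Q) : Strat Q X :=
  fun h q => s (π ++ h) q

/-- The (positional) strategy associated with a per-state choice of mixed actions. -/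
def ofPos {X : Type} [Fintype X] (s : Q → FDist X) : Strat Q X := fun _ q => s q

/-- Probability of reaching the set `S` within `n` steps from current state `q`,
history `h` having been played. -/
def reachSetNAux (δ : Q → A → B → D) (dist : D → FDist Q) (S : Set Q) :
    ℕ → Strat Q A → Strat Q B → List Q → Q → ℝ
  | 0, _, _, _, q => if q ∈ S then 1 else 0
  | n + 1, sA, sB, h, q =>
      if q ∈ S then 1
      else ∑ q', step δ dist (sA h q) (sB h q) q q' *
        reachSetNAux δ dist S n sA sB (h ++ [q]) q'

/-- Probability of reaching the set `S` within `n` steps from state `q`. -/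
def reachSetN (δ : Q → A → B → D) (dist : D → FDist Q) (S : Set Q) (n : ℕ)
    (sA : Strat Q A) (sB : Strat Q B) (q : Q) : ℝ :=
  reachSetNAux δ dist S n sA sB [] q

/-- Probability of reaching the target `T` within `n` steps from state `q`. -/
def reachN (δ : Q → A → B → D) (dist : D → FDist Q) (T : Q) (n : ℕ)
    (sA : Strat Q A) (sB : Strat Q B) (q : Q) : ℝ :=
  reachSetN δ dist {T} n sA sB q

/-- Probability of eventually reaching the target `T` from state `q`. -/
def reach (δ : Q → A → B → D) (dist : D → FDist Q) (T : Q)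
    (sA : Strat Q A) (sB : Strat Q B) (q : Q) : ℝ :=
  ⨆ n : ℕ, reachN δ dist T n sA sB q

/-- The value of a Player A strategy from state `q`. -/
def valA (δ : Q → A → B → D) (dist : D → FDist Q) (T : Q) (sA : Strat Q A) (q : Q) : ℝ :=
  ⨅ sB : Strat Q B, reach δ dist T sA sB q

/-- The value of the game from state `q`. -/
def value (δ : Q → A → B → D) (dist : D → FDist Q) (T : Q) (q : Q) : ℝ :=
  ⨆ sA : Strat Q A, valA δ dist T sA q

/-- A state is maximizable when Player A has an optimal strategy from it. -/
def Maximizable (δ : Q → A → B → D) (dist : D → FDist Q) (T q : Q) : Prop :=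
  ∃ sA : Strat Q A, valA δ dist T sA q = value δ dist T q

/-- A positional Player A strategy locally dominates the valuation `v`. -/
def LocallyDominates (δ : Q → A → B → D) (dist : D → FDist Q)
    (sA : Q → FDist A) (v : Q → ℝ) : Prop :=
  ∀ q, v q ≤ valStratGF (fun a b => lift dist v (δ q a b)) (sA q)

/-- Transition function ι of the MDP induced by a positional Player A strategy. -/
def stepB [DecidableEq B] (δ : Q → A → B → D) (dist : D → FDist Q)
    (sA : Q → FDist A) (q : Q) (b : B) (q' : Q) : ℝ :=
  step δ dist (sA q) (dirac b) q q'

/-- An end component of the MDP induced by the positional Player A strategy `sA`. -/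
structure EndComp [DecidableEq B] (δ : Q → A → B → D) (dist : D → FDist Q)
    (sA : Q → FDist A) where
  states : Set Q
  acts : Q → Set B
  acts_nonempty : ∀ q ∈ states, (acts q).Nonempty
  closed : ∀ q ∈ states, ∀ b ∈ acts q, ∀ q', stepB δ dist sA q b q' ≠ 0 → q' ∈ states
  connected : ∀ q ∈ states, ∀ q' ∈ states,
    Relation.ReflTransGen
      (fun x y => x ∈ states ∧ ∃ b ∈ acts x, stepB δ dist sA x b y ≠ 0) q q'

/-- `S_D` : the Nature states having a non-zero probability to reach `S`. -/
def natS (dist : D → FDist Q) (S : Set Q) : Set D :=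
  { d | ∃ q ∈ S, (dist d).1 q ≠ 0 }

/-- Progressive optimal local strategies at `q` w.r.t. the set `Gd`. -/
def Prog (δ : Q → A → B → D) (dist : D → FDist Q) (m : Q → ℝ) (q : Q)
    (Gd : Set Q) : Set (FDist A) :=
  { σA | σA ∈ OptA (locPay δ dist m q) ∧
      ∀ b ∈ optActs (locPay δ dist m q) σA, ∃ a ∈ supp σA, δ q a b ∈ natS dist Gd }

/-- Risky optimal local strategies at `q` w.r.t. the set `Bd`. -/
def Risk (δ : Q → A → B → D) (dist : D → FDist Q) (m : Q → ℝ) (q : Q)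
    (Bd : Set Q) : Set (FDist A) :=
  { σA | σA ∈ OptA (locPay δ dist m q) ∧
      ∃ b ∈ optActs (locPay δ dist m q) σA, ∃ a ∈ supp σA, δ q a b ∈ natS dist Bd }

/-- Efficient local strategies: progressive and not risky. -/
def Eff (δ : Q → A → B → D) (dist : D → FDist Q) (m : Q → ℝ) (q : Q)
    (Gd Bd : Set Q) : Set (FDist A) :=
  Prog δ dist m q Gd \ Risk δ dist m q Bd

/-- The increasing sequence of sets of secure states w.r.t. `Bd`. -/
def SecN (δ : Q → A → B → D) (dist : D → FDist Q) (m : Q → ℝ) (T : Q) (Bd : Set Q) :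
    ℕ → Set Q
  | 0 => {T}
  | n + 1 => SecN δ dist m T Bd n ∪
      { q | q ∉ Bd ∧ (Eff δ dist m q (SecN δ dist m T Bd n) Bd).Nonempty }

/-- The set of secure states w.r.t. `Bd`. -/
def Sec (δ : Q → A → B → D) (dist : D → FDist Q) (m : Q → ℝ) (T : Q) (Bd : Set Q) :
    Set Q :=
  (⋃ n : ℕ, SecN δ dist m T Bd n) ∪ { q | m q = 0 }

/-- The sequence of sets of bad states. -/
def BadN (δ : Q → A → B → D) (dist : D → FDist Q) (m : Q → ℝ) (T : Q) : ℕ → Set Q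
  | 0 => ∅
  | n + 1 => (Sec δ dist m T (BadN δ dist m T n))ᶜ

/-- The set of bad states. -/
def Bad (δ : Q → A → B → D) (dist : D → FDist Q) (m : Q → ℝ) (T : Q) : Set Q :=
  BadN δ dist m T (Fintype.card Q)

/-- `α[y]` : the total valuation extending the partial valuation `α : O∖E → [0,1]`
with the value `y` on `E`. -/
def extendVal {O : Type} (E : Set O) (α : O → ℝ) (y : ℝ) : O → ℝ :=
  fun o => if o ∈ E then y else α o

/-- The map `f_α : y ↦ val_{⟨F, α[y]⟩}`. -/
def fval {O : Type} (ρ : A → B → O) (E : Set O) (α : O → ℝ) (y : ℝ) : ℝ :=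
  valGF (fun a b => extendVal E α y (ρ a b))

/-- `v` is the least fixed point of `f_α` on `[0,1]`. -/
def IsLfpVal {O : Type} (ρ : A → B → O) (E : Set O) (α : O → ℝ) (v : ℝ) : Prop :=
  v ∈ Set.Icc (0:ℝ) 1 ∧ fval ρ E α v = v ∧
    ∀ y ∈ Set.Icc (0:ℝ) 1, fval ρ E α y = y → v ≤ y

/-- The game form `ρ` is reach-maximizable w.r.t. the partial valuation `α : O∖E → [0,1]`. -/
def RMwrt {O : Type} (ρ : A → B → O) (E : Set O) (α : O → ℝ) : Prop :=
  ∀ v : ℝ, IsLfpVal ρ E α v →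
    v = 0 ∨
      ∃ σA ∈ OptA (fun a b => extendVal E α v (ρ a b)),
        ∀ b ∈ optActs (fun a b => extendVal E α v (ρ a b)) σA,
          ∃ a ∈ supp σA, ρ a b ∉ E

/-- A reach-maximizable game form: RM w.r.t. every partial valuation of its outcomes. -/
def RMform {O : Type} (ρ : A → B → O) : Prop :=
  ∀ (E : Set O) (α : O → ℝ), (∀ o ∉ E, α o ∈ Set.Icc (0:ℝ) 1) → RMwrt ρ E α

/-- A determined game form. -/
def Determined {O : Type} (ρ : A → B → O) : Prop :=
  ∀ E : Set O, (∃ a, ∀ b, ρ a b ∈ E) ∨ (∃ b, ∀ a, ρ a b ∉ E)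

/-- Transition function of the three-state reachability game `C_{(F,α)}`:
state `0` is `q₀`, state `1` is the target `⊤`, state `2` is the bin `⊥`. -/
def triδ {O : Type} (ρ : A → B → O) (E : Set O) :
    Fin 3 → A → B → (Fin 3 ⊕ {o : O // o ∉ E}) :=
  fun s a b =>
    if s = 0 then
      if h : ρ a b ∈ E then Sum.inl 0 else Sum.inr ⟨ρ a b, h⟩
    else Sum.inl s

/-- Nature distributions of the three-state reachability game `C_{(F,α)}`. -/
def triDist {O : Type} (E : Set O) (α : O → ℝ)
    (hα : ∀ o ∉ E, α o ∈ Set.Icc (0:ℝ) 1) :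
    (Fin 3 ⊕ {o : O // o ∉ E}) → FDist (Fin 3) := fun d =>
  match d with
  | Sum.inl t => dirac t
  | Sum.inr x =>
      ⟨![0, α x.1, 1 - α x.1], by
        obtain ⟨h0, h1⟩ := hα x.1 x.2
        constructor
        · intro s
          fin_cases s <;> simp <;> linarith
        · simp [Fin.sum_univ_three]⟩

/-- An abstract (finite) game form with actions `A` and `B`. -/
structure GameForm (A B : Type) where
  O : Type
  fin : Fintype O
  ρ : A → B → O

/-- All local interactions of the arena `δ` belong to the set `𝒢` of game forms
(up to a renaming of the outcomes into Nature states). -/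
def UsesForms {Q D : Type} (𝒢 : Set (GameForm A B)) (δ : Q → A → B → D) : Prop :=
  ∀ q, ∃ F ∈ 𝒢, ∃ g : F.O → D, δ q = fun a b => g (F.ρ a b)

/-- The sequence of iterates of Δ starting from the valuation `1_{⊤}`. -/
def vseq (δ : Q → A → B → D) (dist : D → FDist Q) (T : Q) : ℕ → Q → ℝ
  | 0 => fun q => if q = T then 1 else 0
  | n + 1 => Δop δ dist T (vseq δ dist T n)

/-- Relevant paths w.r.t. the strategy `sA` from the state `q₀`: the pair `(h, q)`
encodes the path `h · q` (history `h`, current state `q`). -/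
inductive Relevant [DecidableEq B] (δ : Q → A → B → D) (dist : D → FDist Q)
    (m : Q → ℝ) (sA : Strat Q A) (q₀ : Q) : List Q → Q → Prop
  | base : Relevant δ dist m sA q₀ [] q₀
  | step {h : List Q} {q q' : Q} :
      Relevant δ dist m sA q₀ h q →
      (∃ b ∈ optActs (locPay δ dist m q) (sA h q),
        0 < CRG.step δ dist (sA h q) (dirac b) q q') →
      Relevant δ dist m sA q₀ (h ++ [q]) q'

end CRG

/-!
The value is the least fixed point `m` of `Δ`: a Player B strategy answering every move with a
locally optimal action keeps the reachability probability below `m`, and gluing ε-optimal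
continuations shows that the value is itself a fixed point of `Δ`. Hence, if `sA` is optimal at
`q ≠ ⊤`, its local strategy at `q` is optimal, and the residual strategy is again optimal at
every successor that an optimal action of Player B reaches with positive probability.

Let `sA` be optimal at `q ∉ Sec(Bd)`. Its local strategy is not risky, since otherwise a state of
`Bd` would be maximizable; not being efficient, it is not progressive towards any `Sec_n(Bd)`, and
as `B` is finite some optimal action of Player B avoids all of them at once. Playing such actions,
Player B keeps the play outside `⋃ₙ Sec_n(Bd) ∋ ⊤` forever, so `m q = val(sA)(q) = 0`.
-/

theorem Fintype.exists_forall_of_antitone {X : Type} [Fintype X] {P : ℕ → X → Prop}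
    (hP : ∀ x, Antitone fun n => P n x) (h : ∀ n, ∃ x, P n x) : ∃ x, ∀ n, P n x := by
  by_contra! hc
  choose N hN using hc
  obtain ⟨x, hx⟩ := h (Finset.univ.sup N)
  exact hN x (hP x (Finset.le_sup (Finset.mem_univ x)) hx)

namespace FDist

variable {X : Type} [Fintype X]

theorem nonneg (σ : FDist X) (x : X) : 0 ≤ σ.1 x := σ.2.1 x

theorem sum_eq_one (σ : FDist X) : ∑ x, σ.1 x = 1 := σ.2.2

theorem le_one (σ : FDist X) (x : X) : σ.1 x ≤ 1 := by
  simpa [σ.sum_eq_one] using Finset.single_le_sum (fun y _ => σ.nonneg y) (Finset.mem_univ x)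

instance [Nonempty X] : Nonempty (FDist X) := ⟨CRG.dirac (Classical.arbitrary X)⟩

end FDist

namespace CRG

instance {Q X : Type} [Fintype X] [Nonempty X] : Nonempty (Strat Q X) :=
  ⟨fun _ _ => Classical.arbitrary _⟩

section NormalForm

variable {A B : Type} [Fintype A] [Fintype B] (u : A → B → ℝ)

theorem abs_out_le (σA : FDist A) (σB : FDist B) :
    |out u σA σB| ≤ ∑ a, ∑ b, |u a b| := by
  refine (Finset.abs_sum_le_sum_abs _ _).trans (Finset.sum_le_sum fun a _ => ?_)
  refine (Finset.abs_sum_le_sum_abs _ _).trans (Finset.sum_le_sum fun b _ => ?_)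
  rw [abs_mul, abs_mul, abs_of_nonneg (σA.nonneg a), abs_of_nonneg (σB.nonneg b)]
  exact mul_le_of_le_one_left (abs_nonneg _)
    (mul_le_one₀ (σA.le_one a) (σB.nonneg b) (σB.le_one b))

theorem bddBelow_range_out (σA : FDist A) : BddBelow (Set.range (out u σA)) :=
  ⟨-∑ a, ∑ b, |u a b|, by
    rintro _ ⟨σB, rfl⟩
    exact neg_le_of_abs_le (abs_out_le u σA σB)⟩

theorem valStratGF_le_out (σA : FDist A) (σB : FDist B) : valStratGF u σA ≤ out u σA σB :=
  ciInf_le (bddBelow_range_out u σA) σB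

theorem out_dirac (σA : FDist A) (b : B) : out u σA (dirac b) = outB u σA b := by
  refine Finset.sum_congr rfl fun a _ => ?_
  rw [Finset.sum_eq_single b] <;> simp_all [dirac]

theorem valStratGF_le_outB (σA : FDist A) (b : B) : valStratGF u σA ≤ outB u σA b :=
  (valStratGF_le_out u σA (dirac b)).trans_eq (out_dirac u σA b)

theorem out_eq_sum_outB (σA : FDist A) (σB : FDist B) :
    out u σA σB = ∑ b, σB.1 b * outB u σA b := by
  simp only [out, outB, Finset.mul_sum]
  rw [Finset.sum_comm]
  exact Finset.sum_congr rfl fun b _ => Finset.sum_congr rfl fun a _ => by ring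

theorem exists_optAct [Nonempty B] (σA : FDist A) : ∃ b, b ∈ optActs u σA := by
  obtain ⟨b₀, -, hb₀⟩ := Finset.exists_min_image Finset.univ (outB u σA) Finset.univ_nonempty
  refine ⟨b₀, le_antisymm (le_ciInf fun σB => ?_) (valStratGF_le_outB u σA b₀)⟩
  calc outB u σA b₀ = ∑ b, σB.1 b * outB u σA b₀ := by rw [← Finset.sum_mul, σB.sum_eq_one, one_mul]
    _ ≤ ∑ b, σB.1 b * outB u σA b :=
      Finset.sum_le_sum fun b hb => mul_le_mul_of_nonneg_left (hb₀ b hb) (σB.nonneg b)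
    _ = out u σA σB := (out_eq_sum_outB u σA σB).symm

theorem valStratGF_le_valGF [Nonempty B] (σA : FDist A) : valStratGF u σA ≤ valGF u := by
  refine le_ciSup ⟨∑ a, ∑ b, |u a b|, ?_⟩ σA
  rintro _ ⟨σ, rfl⟩
  exact (valStratGF_le_out u σ (Classical.arbitrary _)).trans (le_of_abs_le (abs_out_le u σ _))

variable {u} {u' : A → B → ℝ}

theorem out_mono (h : ∀ a b, u a b ≤ u' a b) (σA : FDist A) (σB : FDist B) :
    out u σA σB ≤ out u' σA σB :=
  Finset.sum_le_sum fun a _ => Finset.sum_le_sum fun b _ =>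
    mul_le_mul_of_nonneg_left (h a b) (mul_nonneg (σA.nonneg a) (σB.nonneg b))

theorem valStratGF_mono [Nonempty B] (h : ∀ a b, u a b ≤ u' a b) (σA : FDist A) :
    valStratGF u σA ≤ valStratGF u' σA :=
  le_ciInf fun σB => (valStratGF_le_out u σA σB).trans (out_mono h σA σB)

end NormalForm


section Step

variable {A B Q D : Type} [Fintype A] [Fintype B] [Fintype Q]
  {δ : Q → A → B → D} {dist : D → FDist Q}

theorem lift_mono {v w : Q → ℝ} (h : ∀ q, v q ≤ w q) (d : D) :
    lift dist v d ≤ lift dist w d :=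
  Finset.sum_le_sum fun q _ => mul_le_mul_of_nonneg_left (h q) ((dist d).nonneg q)

theorem step_nonneg (σA : FDist A) (σB : FDist B) (q q' : Q) :
    0 ≤ step δ dist σA σB q q' :=
  Finset.sum_nonneg fun a _ => Finset.sum_nonneg fun b _ =>
    mul_nonneg (mul_nonneg (σA.nonneg a) (σB.nonneg b)) ((dist _).nonneg q')

theorem sum_step_mul (v : Q → ℝ) (σA : FDist A) (σB : FDist B) (q : Q) :
    ∑ q', step δ dist σA σB q q' * v q' = out (locPay δ dist v q) σA σB := by
  simp only [step, out, locPay, lift, Finset.sum_mul, Finset.mul_sum]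
  rw [Finset.sum_comm]
  refine Finset.sum_congr rfl fun a _ => ?_
  rw [Finset.sum_comm]
  exact Finset.sum_congr rfl fun b _ => Finset.sum_congr rfl fun q' _ => by ring

theorem sum_step (σA : FDist A) (σB : FDist B) (q : Q) :
    ∑ q', step δ dist σA σB q q' = 1 := by
  have h := sum_step_mul (δ := δ) (dist := dist) (fun _ => 1) σA σB q
  simp only [mul_one] at h
  rw [h, out_eq_sum_outB]
  simp [outB, locPay, lift, FDist.sum_eq_one]

theorem sum_step_dirac_mul (v : Q → ℝ) (σA : FDist A) (b : B) (q : Q) :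
    ∑ q', step δ dist σA (dirac b) q q' * v q' = outB (locPay δ dist v q) σA b := by
  rw [sum_step_mul, out_dirac]

theorem step_dirac (σA : FDist A) (b : B) (q q' : Q) :
    step δ dist σA (dirac b) q q' = ∑ a, σA.1 a * (dist (δ q a b)).1 q' := by
  refine Finset.sum_congr rfl fun a _ => ?_
  rw [Finset.sum_eq_single b] <;> simp_all [dirac]

theorem step_dirac_ne_zero_iff (σA : FDist A) (b : B) (q q' : Q) :
    step δ dist σA (dirac b) q q' ≠ 0 ↔ ∃ a ∈ supp σA, (dist (δ q a b)).1 q' ≠ 0 := by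
  rw [step_dirac, Ne, Finset.sum_eq_zero_iff_of_nonneg fun a _ =>
    mul_nonneg (σA.nonneg a) ((dist _).nonneg q')]
  simp [supp]

theorem exists_mem_supp_natS_iff (S : Set Q) (σA : FDist A) (b : B) (q : Q) :
    (∃ a ∈ supp σA, δ q a b ∈ natS dist S) ↔ ∃ q' ∈ S, step δ dist σA (dirac b) q q' ≠ 0 := by
  simp only [step_dirac_ne_zero_iff, natS]
  aesop

end Step

def EqOnPlaysFrom {Q X : Type} [Fintype X] (q : Q) (s s' : Strat Q X) : Prop :=
  s [] q = s' [] q ∧ ∀ h x, s (q :: h) x = s' (q :: h) x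

theorem EqOnPlaysFrom.refl {Q X : Type} [Fintype X] (q : Q) (s : Strat Q X) :
    EqOnPlaysFrom q s s :=
  ⟨rfl, fun _ _ => rfl⟩

theorem EqOnPlaysFrom.residual {Q X : Type} [Fintype X] {q : Q} {s s' : Strat Q X}
    (hs : EqOnPlaysFrom q s s') (q' : Q) :
    EqOnPlaysFrom q' (residual s [q]) (residual s' [q]) :=
  ⟨hs.2 [] q', fun h x => hs.2 (q' :: h) x⟩

section Reach

variable {A B Q D : Type} [Fintype A] [Fintype B] [Fintype Q]
  {δ : Q → A → B → D} {dist : D → FDist Q} {T : Q}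

theorem reachSetNAux_append (S : Set Q) (n : ℕ) (sA : Strat Q A) (sB : Strat Q B)
    (H h : List Q) (q : Q) :
    reachSetNAux δ dist S n sA sB (H ++ h) q =
      reachSetNAux δ dist S n (residual sA H) (residual sB H) h q := by
  induction n generalizing h q with
  | zero => rfl
  | succ n ih =>
    simp only [reachSetNAux, List.append_assoc, ih]
    rfl

theorem reachN_target (n : ℕ) (sA : Strat Q A) (sB : Strat Q B) :
    reachN δ dist T n sA sB T = 1 := by
  cases n <;> simp [reachN, reachSetN, reachSetNAux]

theorem reachN_zero_of_ne {q : Q} (hq : q ≠ T) (sA : Strat Q A) (sB : Strat Q B) :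
    reachN δ dist T 0 sA sB q = 0 := by
  simp [reachN, reachSetN, reachSetNAux, hq]

theorem reachN_succ_of_ne {q : Q} (hq : q ≠ T) (n : ℕ) (sA : Strat Q A) (sB : Strat Q B) :
    reachN δ dist T (n + 1) sA sB q = ∑ q', step δ dist (sA [] q) (sB [] q) q q' *
      reachN δ dist T n (residual sA [q]) (residual sB [q]) q' := by
  simp only [reachN, reachSetN, reachSetNAux, Set.mem_singleton_iff, hq, if_false]
  exact Finset.sum_congr rfl fun q' _ => by
    rw [← reachSetNAux_append, List.nil_append, List.append_nil]

theorem reachN_nonneg (n : ℕ) (sA : Strat Q A) (sB : Strat Q B) (q : Q) :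
    0 ≤ reachN δ dist T n sA sB q := by
  induction n generalizing sA sB q with
  | zero => unfold reachN reachSetN reachSetNAux; split <;> norm_num
  | succ n ih =>
    rcases eq_or_ne q T with rfl | hq
    · rw [reachN_target]; exact zero_le_one
    rw [reachN_succ_of_ne hq]
    exact Finset.sum_nonneg fun q' _ => mul_nonneg (step_nonneg _ _ _ _) (ih _ _ _)

theorem reachN_le_one (n : ℕ) (sA : Strat Q A) (sB : Strat Q B) (q : Q) :
    reachN δ dist T n sA sB q ≤ 1 := by
  induction n generalizing sA sB q with
  | zero => unfold reachN reachSetN reachSetNAux; split <;> norm_num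
  | succ n ih =>
    rcases eq_or_ne q T with rfl | hq
    · rw [reachN_target]
    rw [reachN_succ_of_ne hq, ← sum_step (δ := δ) (dist := dist) (sA [] q) (sB [] q) q]
    exact Finset.sum_le_sum fun q' _ => mul_le_of_le_one_right (step_nonneg _ _ _ _) (ih _ _ _)

theorem monotone_reachN (sA : Strat Q A) (sB : Strat Q B) (q : Q) :
    Monotone fun n => reachN δ dist T n sA sB q := by
  refine monotone_nat_of_le_succ fun n => ?_
  induction n generalizing sA sB q with
  | zero =>
    rcases eq_or_ne q T with rfl | hq
    · rw [reachN_target, reachN_target]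
    rw [reachN_zero_of_ne hq]
    exact reachN_nonneg _ _ _ _
  | succ n ih =>
    rcases eq_or_ne q T with rfl | hq
    · rw [reachN_target, reachN_target]
    rw [reachN_succ_of_ne hq, reachN_succ_of_ne hq]
    exact Finset.sum_le_sum fun q' _ => mul_le_mul_of_nonneg_left (ih _ _ _) (step_nonneg _ _ _ _)

theorem reachN_congr (n : ℕ) {sA sA' : Strat Q A} {sB sB' : Strat Q B} {q : Q}
    (hA : EqOnPlaysFrom q sA sA') (hB : EqOnPlaysFrom q sB sB') :
    reachN δ dist T n sA sB q = reachN δ dist T n sA' sB' q := by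
  induction n generalizing sA sA' sB sB' q with
  | zero => rfl
  | succ n ih =>
    rcases eq_or_ne q T with rfl | hq
    · rw [reachN_target, reachN_target]
    rw [reachN_succ_of_ne hq, reachN_succ_of_ne hq, hA.1, hB.1]
    exact Finset.sum_congr rfl fun q' _ => by rw [ih (hA.residual q') (hB.residual q')]

theorem bddAbove_range_reachN (sA : Strat Q A) (sB : Strat Q B) (q : Q) :
    BddAbove (Set.range fun n => reachN δ dist T n sA sB q) :=
  ⟨1, by rintro _ ⟨n, rfl⟩; exact reachN_le_one n sA sB q⟩

theorem tendsto_reachN (sA : Strat Q A) (sB : Strat Q B) (q : Q) :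
    Filter.Tendsto (fun n => reachN δ dist T n sA sB q) Filter.atTop
      (nhds (reach δ dist T sA sB q)) :=
  tendsto_atTop_ciSup (monotone_reachN sA sB q) (bddAbove_range_reachN sA sB q)

theorem reachN_le_reach (n : ℕ) (sA : Strat Q A) (sB : Strat Q B) (q : Q) :
    reachN δ dist T n sA sB q ≤ reach δ dist T sA sB q :=
  le_ciSup (bddAbove_range_reachN sA sB q) n

theorem reach_nonneg (sA : Strat Q A) (sB : Strat Q B) (q : Q) :
    0 ≤ reach δ dist T sA sB q :=
  (reachN_nonneg 0 sA sB q).trans (reachN_le_reach 0 sA sB q)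

theorem reach_le_one (sA : Strat Q A) (sB : Strat Q B) (q : Q) :
    reach δ dist T sA sB q ≤ 1 :=
  ciSup_le fun n => reachN_le_one n sA sB q

theorem reach_target (sA : Strat Q A) (sB : Strat Q B) : reach δ dist T sA sB T = 1 := by
  simp [reach, reachN_target]

theorem reach_of_ne {q : Q} (hq : q ≠ T) (sA : Strat Q A) (sB : Strat Q B) :
    reach δ dist T sA sB q = ∑ q', step δ dist (sA [] q) (sB [] q) q q' *
      reach δ dist T (residual sA [q]) (residual sB [q]) q' := by
  refine tendsto_nhds_unique ((Filter.tendsto_add_atTop_iff_nat 1).2 (tendsto_reachN sA sB q)) ?_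
  simp only [reachN_succ_of_ne hq]
  exact tendsto_finsetSum _ fun q' _ => (tendsto_reachN _ _ q').const_mul _

theorem reach_congr {sA sA' : Strat Q A} {sB sB' : Strat Q B} {q : Q}
    (hA : EqOnPlaysFrom q sA sA') (hB : EqOnPlaysFrom q sB sB') :
    reach δ dist T sA sB q = reach δ dist T sA' sB' q :=
  iSup_congr fun n => reachN_congr n hA hB

end Reach

section OptimalReply

variable {A B : Type} [Fintype A] [Fintype B] [Nonempty B]
  (u : A → B → ℝ) (σA : FDist A) (P : B → Prop)

def optReply : B :=
  if h : ∃ b ∈ optActs u σA, P b then h.choose else (exists_optAct u σA).choose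

theorem optReply_mem_optActs : optReply u σA P ∈ optActs u σA := by
  unfold optReply
  split_ifs with h
  exacts [h.choose_spec.1, (exists_optAct u σA).choose_spec]

theorem optReply_spec (h : ∃ b ∈ optActs u σA, P b) : P (optReply u σA P) := by
  rw [optReply, dif_pos h]
  exact h.choose_spec.2

end OptimalReply

def glue {Q X : Type} [Fintype X] (σ : FDist X) (s : Q → Strat Q X) : Strat Q X
  | [], _ => σ
  | _ :: h, q => s (h.headD q) h q -- `h.headD q` is the state reached by the first move

theorem eqOnPlaysFrom_glue {Q X : Type} [Fintype X] (σ : FDist X) (s : Q → Strat Q X)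
    (q q' : Q) : EqOnPlaysFrom q' (residual (glue σ s) [q]) (s q') :=
  ⟨rfl, fun _ _ => rfl⟩

section Value

variable {A B Q D : Type} [Fintype A] [Fintype B] [Fintype Q]
  {δ : Q → A → B → D} {dist : D → FDist Q} {T : Q}

theorem valA_le_reach (sA : Strat Q A) (sB : Strat Q B) (q : Q) :
    valA δ dist T sA q ≤ reach δ dist T sA sB q :=
  ciInf_le ⟨0, by rintro _ ⟨sB, rfl⟩; exact reach_nonneg sA sB q⟩ sB

variable [Nonempty B]

theorem valA_nonneg (sA : Strat Q A) (q : Q) : 0 ≤ valA δ dist T sA q :=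
  le_ciInf fun sB => reach_nonneg sA sB q

theorem valA_le_one (sA : Strat Q A) (q : Q) : valA δ dist T sA q ≤ 1 :=
  (valA_le_reach sA (Classical.arbitrary (Strat Q B)) q).trans (reach_le_one _ _ q)

theorem valA_target (sA : Strat Q A) : valA δ dist T sA T = 1 :=
  le_antisymm (valA_le_one sA T) (le_ciInf fun sB => (reach_target sA sB).ge)

theorem valA_le_value (sA : Strat Q A) (q : Q) : valA δ dist T sA q ≤ value δ dist T q :=
  le_ciSup (f := fun s => valA δ dist T s q) ⟨1, by rintro _ ⟨s, rfl⟩; exact valA_le_one s q⟩ sA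

theorem valA_le_valStratGF_residual {q : Q} (hq : q ≠ T) (sA : Strat Q A) :
    valA δ dist T sA q ≤
      valStratGF (locPay δ dist (valA δ dist T (residual sA [q])) q) (sA [] q) := by
  refine le_ciInf fun σB => le_of_forall_pos_le_add fun ε hε => ?_
  have hcont : ∀ q', ∃ t : Strat Q B, reach δ dist T (residual sA [q]) t q' <
      valA δ dist T (residual sA [q]) q' + ε :=
    fun q' => exists_lt_of_ciInf_lt (lt_add_of_pos_right _ hε)
  choose t ht using hcont
  calc valA δ dist T sA q ≤ reach δ dist T sA (glue σB t) q := valA_le_reach _ _ _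
    _ = ∑ q', step δ dist (sA [] q) σB q q' * reach δ dist T (residual sA [q]) (t q') q' := by
        rw [reach_of_ne hq]
        refine Finset.sum_congr rfl fun q' _ => ?_
        rw [reach_congr (.refl q' _) (eqOnPlaysFrom_glue σB t q q')]
        rfl
    _ ≤ ∑ q', step δ dist (sA [] q) σB q q' * (valA δ dist T (residual sA [q]) q' + ε) :=
        Finset.sum_le_sum fun q' _ =>
          mul_le_mul_of_nonneg_left (ht q').le (step_nonneg _ _ _ _)
    _ = out (locPay δ dist (valA δ dist T (residual sA [q])) q) (sA [] q) σB + ε := by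
        simp only [mul_add, Finset.sum_add_distrib, ← Finset.sum_mul, sum_step, one_mul,
          sum_step_mul]

variable [Nonempty A]

theorem value_nonneg (q : Q) : 0 ≤ value δ dist T q :=
  (valA_nonneg (Classical.arbitrary (Strat Q A)) q).trans (valA_le_value _ q)

theorem value_le_one (q : Q) : value δ dist T q ≤ 1 :=
  ciSup_le fun sA => valA_le_one sA q

theorem value_target : value δ dist T T = 1 :=
  le_antisymm (value_le_one T)
    ((valA_target (Classical.arbitrary (Strat Q A))).symm.trans_le (valA_le_value _ T))

theorem valGF_locPay_value_le {q : Q} (hq : q ≠ T) :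
    valGF (locPay δ dist (value δ dist T) q) ≤ value δ dist T q := by
  refine le_of_forall_pos_le_add fun ε hε => ?_
  obtain ⟨σA, hσA⟩ := exists_lt_of_lt_ciSup
    (sub_lt_self (valGF (locPay δ dist (value δ dist T) q)) (half_pos hε))
  have hcont : ∀ q', ∃ s : Strat Q A, value δ dist T q' - ε / 2 < valA δ dist T s q' :=
    fun q' => exists_lt_of_lt_ciSup (sub_lt_self _ (half_pos hε))
  choose s hs using hcont
  suffices h : valGF (locPay δ dist (value δ dist T) q) - ε ≤ valA δ dist T (glue σA s) q by
    linarith [valA_le_value (δ := δ) (dist := dist) (T := T) (glue σA s) q]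
  refine le_ciInf fun sB => ?_
  rw [reach_of_ne hq]
  calc valGF (locPay δ dist (value δ dist T) q) - ε
      ≤ out (locPay δ dist (value δ dist T) q) σA (sB [] q) - ε / 2 := by
        linarith [valStratGF_le_out (locPay δ dist (value δ dist T) q) σA (sB [] q)]
    _ = ∑ q', step δ dist σA (sB [] q) q q' * (value δ dist T q' - ε / 2) := by
        simp only [mul_sub, Finset.sum_sub_distrib, ← Finset.sum_mul, sum_step, one_mul,
          sum_step_mul]
    _ ≤ ∑ q', step δ dist σA (sB [] q) q q' *
          reach δ dist T (residual (glue σA s) [q]) (residual sB [q]) q' := by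
        refine Finset.sum_le_sum fun q' _ => mul_le_mul_of_nonneg_left ?_ (step_nonneg _ _ _ _)
        rw [reach_congr (eqOnPlaysFrom_glue σA s q q') (.refl q' _)]
        exact (hs q').le.trans (valA_le_reach _ _ _)

theorem value_le_valGF_locPay_value {q : Q} (hq : q ≠ T) :
    value δ dist T q ≤ valGF (locPay δ dist (value δ dist T) q) :=
  ciSup_le fun sA => (valA_le_valStratGF_residual hq sA).trans <|
    (valStratGF_mono (fun _ _ => lift_mono (fun q' => valA_le_value _ q') _) _).trans
      (valStratGF_le_valGF _ _)

theorem Δop_value : Δop δ dist T (value δ dist T) = value δ dist T := by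
  funext q
  unfold Δop
  split_ifs with hq
  · rw [hq, value_target]
  · exact le_antisymm (valGF_locPay_value_le hq) (value_le_valGF_locPay_value hq)

end Value

section LeastFixedPoint

variable {A B Q D : Type} [Fintype A] [Fintype B] [Fintype Q]
  {δ : Q → A → B → D} {dist : D → FDist Q} {T : Q} {m : Q → ℝ}

theorem IsLfpDelta.apply_target (hm : IsLfpDelta δ dist T m) : m T = 1 := by
  simpa [Δop] using (congrFun hm.2.1 T).symm

theorem IsLfpDelta.valGF_locPay (hm : IsLfpDelta δ dist T m) {q : Q} (hq : q ≠ T) :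
    valGF (locPay δ dist m q) = m q := by
  have h := congrFun hm.2.1 q
  rwa [Δop, if_neg hq] at h

variable [Nonempty B]

def replyStrat (δ : Q → A → B → D) (dist : D → FDist Q) (m : Q → ℝ)
    (P : Q → FDist A → B → Prop) (sA : Strat Q A) : Strat Q B :=
  fun h q => dirac (optReply (locPay δ dist m q) (sA h q) (P q (sA h q)))

theorem reachN_replyStrat_le (hm : IsLfpDelta δ dist T m) (P : Q → FDist A → B → Prop)
    (n : ℕ) (sA : Strat Q A) (q : Q) :
    reachN δ dist T n sA (replyStrat δ dist m P sA) q ≤ m q := by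
  induction n generalizing sA q with
  | zero =>
    rcases eq_or_ne q T with rfl | hq
    · rw [reachN_target, hm.apply_target]
    · rw [reachN_zero_of_ne hq]; exact (hm.1 q).1
  | succ n ih =>
    rcases eq_or_ne q T with rfl | hq
    · rw [reachN_target, hm.apply_target]
    set σ := sA [] q
    have hb := optReply_mem_optActs (locPay δ dist m q) σ (P q σ)
    rw [reachN_succ_of_ne hq]
    calc _ ≤ ∑ q', step δ dist σ (dirac (optReply (locPay δ dist m q) σ (P q σ))) q q' * m q' :=
          Finset.sum_le_sum fun q' _ =>
            mul_le_mul_of_nonneg_left (ih (residual sA [q]) q') (step_nonneg _ _ _ _)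
      _ = valStratGF (locPay δ dist m q) σ := (sum_step_dirac_mul _ _ _ _).trans hb
      _ ≤ m q := (valStratGF_le_valGF _ σ).trans (hm.valGF_locPay hq).le

theorem valA_le_m (hm : IsLfpDelta δ dist T m) (sA : Strat Q A) (q : Q) :
    valA δ dist T sA q ≤ m q :=
  (valA_le_reach sA (replyStrat δ dist m (fun _ _ _ => True) sA) q).trans
    (ciSup_le fun n => reachN_replyStrat_le hm _ n sA q)

theorem mem_optA_of_valA_eq (hm : IsLfpDelta δ dist T m) {sA : Strat Q A} {q : Q}
    (hq : q ≠ T) (hinv : valA δ dist T sA q = m q) : sA [] q ∈ OptA (locPay δ dist m q) := by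
  refine le_antisymm (valStratGF_le_valGF _ _) ?_
  rw [hm.valGF_locPay hq, ← hinv]
  exact (valA_le_valStratGF_residual hq sA).trans
    (valStratGF_mono (fun _ _ => lift_mono (fun q' => valA_le_m hm _ q') _) _)

theorem valA_residual_eq_of_step_ne_zero (hm : IsLfpDelta δ dist T m) {sA : Strat Q A}
    {q : Q} (hq : q ≠ T) (hinv : valA δ dist T sA q = m q) {b : B}
    (hb : b ∈ optActs (locPay δ dist m q) (sA [] q)) {q' : Q}
    (hstep : step δ dist (sA [] q) (dirac b) q q' ≠ 0) :
    valA δ dist T (residual sA [q]) q' = m q' := by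
  set g := valA δ dist T (residual sA [q])
  have hgm : ∀ q'', g q'' ≤ m q'' := fun q'' => valA_le_m hm _ q''
  have hterm : ∀ q'', 0 ≤ step δ dist (sA [] q) (dirac b) q q'' * (m q'' - g q'') :=
    fun q'' => mul_nonneg (step_nonneg _ _ _ _) (sub_nonneg.2 (hgm q''))
  have hsum : ∑ q'', step δ dist (sA [] q) (dirac b) q q'' * (m q'' - g q'') = 0 := by
    have hg : m q ≤ outB (locPay δ dist g q) (sA [] q) b :=
      hinv ▸ (valA_le_valStratGF_residual hq sA).trans (valStratGF_le_outB _ _ b)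
    have hm' : outB (locPay δ dist m q) (sA [] q) b = m q :=
      hb.trans ((mem_optA_of_valA_eq hm hq hinv).trans (hm.valGF_locPay hq))
    refine le_antisymm ?_ (Finset.sum_nonneg fun q'' _ => hterm q'')
    simp only [mul_sub, Finset.sum_sub_distrib, sum_step_dirac_mul]
    linarith
  have h0 := (Finset.sum_eq_zero_iff_of_nonneg fun q'' _ => hterm q'').1 hsum q' (Finset.mem_univ _)
  exact (sub_eq_zero.1 ((mul_eq_zero.1 h0).resolve_left hstep)).symm

variable [Nonempty A]

theorem value_le_m (hm : IsLfpDelta δ dist T m) (q : Q) : value δ dist T q ≤ m q :=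
  ciSup_le fun sA => valA_le_m hm sA q

theorem value_eq_m (hm : IsLfpDelta δ dist T m) (q : Q) : value δ dist T q = m q :=
  le_antisymm (value_le_m hm q)
    (hm.2.2 _ (fun q' => ⟨value_nonneg q', value_le_one q'⟩) Δop_value q)

theorem maximizable_of_valA_eq (hm : IsLfpDelta δ dist T m) {sA : Strat Q A} {q : Q}
    (h : valA δ dist T sA q = m q) : Maximizable δ dist T q :=
  ⟨sA, le_antisymm (valA_le_value sA q) ((value_le_m hm q).trans h.ge)⟩

end LeastFixedPoint

section Secure

variable {A B Q D : Type} [Fintype A] [Fintype B] [Fintype Q]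
  {δ : Q → A → B → D} {dist : D → FDist Q} {T : Q} {m : Q → ℝ} {Bd : Set Q}

theorem SecN_mono : Monotone (SecN δ dist m T Bd) :=
  monotone_nat_of_le_succ fun _ _ hx => Or.inl hx

theorem ne_target_of_not_mem_iUnion_SecN {q : Q} (hq : q ∉ ⋃ n, SecN δ dist m T Bd n) :
    q ≠ T :=
  fun h => hq (Set.mem_iUnion.2 ⟨0, h⟩)

def Avoids (δ : Q → A → B → D) (dist : D → FDist Q) (S : Set Q) (q : Q) (σA : FDist A)
    (b : B) : Prop :=
  ∀ q' ∈ S, step δ dist σA (dirac b) q q' = 0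

variable [Nonempty A] [Nonempty B]

theorem exists_optAct_avoids_Sec (hm : IsLfpDelta δ dist T m)
    (hBd : ∀ q ∈ Bd, ¬ Maximizable δ dist T q) {sA : Strat Q A} {q : Q}
    (hq : q ∉ ⋃ n, SecN δ dist m T Bd n) (hinv : valA δ dist T sA q = m q) :
    ∃ b ∈ optActs (locPay δ dist m q) (sA [] q),
      Avoids δ dist (⋃ n, SecN δ dist m T Bd n) q (sA [] q) b := by
  have hqT := ne_target_of_not_mem_iUnion_SecN hq
  have hopt := mem_optA_of_valA_eq hm hqT hinv
  have hqBd : q ∉ Bd := fun h => hBd q h (maximizable_of_valA_eq hm hinv)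
  have hnotRisk : sA [] q ∉ Risk δ dist m q Bd := by
    rintro ⟨-, b, hb, hBdnat⟩
    obtain ⟨q', hq'Bd, hstep⟩ := (exists_mem_supp_natS_iff Bd _ b q).1 hBdnat
    exact hBd q' hq'Bd
      (maximizable_of_valA_eq hm (valA_residual_eq_of_step_ne_zero hm hqT hinv hb hstep))
  have hlevel : ∀ n, ∃ b, b ∈ optActs (locPay δ dist m q) (sA [] q) ∧
      Avoids δ dist (SecN δ dist m T Bd n) q (sA [] q) b := by
    intro n
    by_contra! hprog
    refine hq (Set.mem_iUnion.2 ⟨n + 1, Or.inr ⟨hqBd, sA [] q, ⟨hopt, fun b hb => ?_⟩, hnotRisk⟩⟩)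
    exact (exists_mem_supp_natS_iff _ _ b q).2 (by simpa [Avoids] using hprog b hb)
  obtain ⟨b, hb⟩ := Fintype.exists_forall_of_antitone
    (fun b _ _ hnn' h => ⟨h.1, fun q' hq' => h.2 q' (SecN_mono hnn' hq')⟩) hlevel
  refine ⟨b, (hb 0).1, fun q' hq' => ?_⟩
  obtain ⟨n, hn⟩ := Set.mem_iUnion.1 hq'
  exact (hb n).2 q' hn

theorem reachN_replyStrat_avoids_eq_zero (hm : IsLfpDelta δ dist T m)
    (hBd : ∀ q ∈ Bd, ¬ Maximizable δ dist T q) (n : ℕ) {sA : Strat Q A} {q : Q}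
    (hq : q ∉ ⋃ n, SecN δ dist m T Bd n) (hinv : valA δ dist T sA q = m q) :
    reachN δ dist T n sA
      (replyStrat δ dist m (Avoids δ dist (⋃ n, SecN δ dist m T Bd n)) sA) q = 0 := by
  induction n generalizing sA q with
  | zero => exact reachN_zero_of_ne (ne_target_of_not_mem_iUnion_SecN hq) _ _
  | succ n ih =>
    have hqT := ne_target_of_not_mem_iUnion_SecN hq
    rw [reachN_succ_of_ne hqT]
    refine Finset.sum_eq_zero fun q' _ => ?_
    set b := optReply (locPay δ dist m q) (sA [] q)
      (Avoids δ dist (⋃ n, SecN δ dist m T Bd n) q (sA [] q))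
    have hb : b ∈ optActs (locPay δ dist m q) (sA [] q) := optReply_mem_optActs _ _ _
    rcases eq_or_ne (step δ dist (sA [] q) (dirac b) q q') 0 with h0 | h0
    · exact mul_eq_zero_of_left h0 _
    have hq' : q' ∉ ⋃ n, SecN δ dist m T Bd n :=
      fun hmem => h0 (optReply_spec _ _ _ (exists_optAct_avoids_Sec hm hBd hq hinv) q' hmem)
    exact mul_eq_zero_of_right _
      (ih hq' (valA_residual_eq_of_step_ne_zero hm hqT hinv hb h0))

theorem m_eq_zero_of_valA_eq (hm : IsLfpDelta δ dist T m)
    (hBd : ∀ q ∈ Bd, ¬ Maximizable δ dist T q) {sA : Strat Q A} {q : Q}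
    (hq : q ∉ ⋃ n, SecN δ dist m T Bd n) (hinv : valA δ dist T sA q = m q) : m q = 0 := by
  refine le_antisymm ?_ (hm.1 q).1
  rw [← hinv]
  exact (valA_le_reach sA
    (replyStrat δ dist m (Avoids δ dist (⋃ n, SecN δ dist m T Bd n)) sA) q).trans
      (ciSup_le fun n => (reachN_replyStrat_avoids_eq_zero hm hBd n hq hinv).le)

end Secure

end CRG

theorem stmt5_general
    {A B Q D : Type} [Fintype A] [Fintype B] [Fintype Q]
    [Nonempty A] [Nonempty B]
    (δ : Q → A → B → D) (dist : D → FDist Q) (T : Q)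
    (m : Q → ℝ) (hm : CRG.IsLfpDelta δ dist T m)
    (Bd : Set Q) (hBd : ∀ q ∈ Bd, ¬ CRG.Maximizable δ dist T q) :
    ∀ q : Q, q ∉ CRG.Sec δ dist m T Bd → ¬ CRG.Maximizable δ dist T q := by
  rintro q hq ⟨sA, hsA⟩
  exact hq (Or.inr (CRG.m_eq_zero_of_valA_eq hm hBd (fun h => hq (Or.inl h))
    (hsA.trans (CRG.value_eq_m hm q))))

/-- if all states of `Bd` are sub-maximizable, then so are all states
outside `Sec(Bd)`. -/
theorem stmt5
    {A B Q D : Type} [Fintype A] [Fintype B] [Fintype Q] [Fintype D]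
    [Nonempty A] [Nonempty B] [Nonempty Q] [Nonempty D] [DecidableEq Q]
    (δ : Q → A → B → D) (dist : D → FDist Q) (T : Q)
    (habs : CRG.Absorbing δ dist T)
    (m : Q → ℝ) (hm : CRG.IsLfpDelta δ dist T m)
    (Bd : Set Q) (hBd : ∀ q ∈ Bd, ¬ CRG.Maximizable δ dist T q) :
    ∀ q : Q, q ∉ CRG.Sec δ dist m T Bd → ¬ CRG.Maximizable δ dist T q :=
  stmt5_general δ dist T m hm Bd hBd
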